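/- arXiv:1912.05473 — 4 statements merged into one kernel-verified Lean document; each statement's English description precedes it below -/
import Mathlib

section
/- Maximum principle, nonnegativity: Let x_k : [0,T] → ℝ (indexed by k ∈ {-N,...,-1,1,...,N}) be continuous paths with x_k(t) ≠ x_l(t) for all k ≠ ±l and x_k(t) ≠ 0, and suppose v_k : [0,T] → ℝ is C¹ and satisfies v_k'(t) = (1/2)(1 - 1/ξ) v_k(t)/x_k(t)² + (1/(2N)) Σ_{l ≠ ±k} (v_l(t) - v_k(t))/(x_l(t) - x_k(t))², with ξ ∈ (0,1] and v_k(0) ≥ 0 for all k. Then v_k(t) ≥ 0 for all t ∈ [0,T] and all k. -/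
open Finset

/-- Maximum principle (nonnegativity) for the non-local parabolic system
`v_k' = ½(1 − 1/ξ) v_k/x_k² + (1/2N) Σ_{l ≠ ±k} (v_l − v_k)/(x_l − x_k)²`. -/
theorem max_principle_nonneg
    (N : ℕ) (hN : 1 ≤ N) (ξ T : ℝ) (hξ : ξ ∈ Set.Ioc (0 : ℝ) 1) (hT : 0 ≤ T)
    (K : Finset ℤ) (hK : K = Finset.Icc (-(N : ℤ)) N \ {0})
    (x v : ℤ → ℝ → ℝ)
    (hxcont : ∀ k ∈ K, ContinuousOn (x k) (Set.Icc 0 T))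
    (hxne : ∀ t ∈ Set.Icc (0 : ℝ) T, ∀ k ∈ K, ∀ l ∈ K, k ≠ l → k ≠ -l →
      x k t ≠ x l t)
    (hx0 : ∀ t ∈ Set.Icc (0 : ℝ) T, ∀ k ∈ K, x k t ≠ 0)
    (hode : ∀ k ∈ K, ∀ t ∈ Set.Icc (0 : ℝ) T,
      HasDerivAt (v k)
        ((1/2) * (1 - 1/ξ) * v k t / (x k t)^2
          + (1 / (2 * N)) * ∑ l ∈ K \ {k, -k}, (v l t - v k t) / (x l t - x k t)^2) t)
    (hv0 : ∀ k ∈ K, 0 ≤ v k 0) :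
    ∀ t ∈ Set.Icc (0 : ℝ) T, ∀ k ∈ K, 0 ≤ v k t := by
  -- Key: for every ε > 0, v j s + ε(1+s) > 0 on [0,T].
  have key : ∀ ε > 0, ∀ s ∈ Set.Icc (0:ℝ) T, ∀ j ∈ K, 0 < v j s + ε * (1 + s) := by
    intro ε hε
    by_contra hcon
    push_neg at hcon
    obtain ⟨s₀, hs₀, j₀, hj₀, hle₀⟩ := hcon
    set S : Set ℝ := {s | s ∈ Set.Icc (0:ℝ) T ∧ ∃ j ∈ K, v j s + ε * (1 + s) ≤ 0} with hS
    have hSne : S.Nonempty := ⟨s₀, hs₀, j₀, hj₀, hle₀⟩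
    have hSbdd : BddBelow S := ⟨0, fun s hs => hs.1.1⟩
    have hScl : IsClosed S := by
      have hrw : S = ⋃ j ∈ K,
          (Set.Icc (0:ℝ) T ∩ (fun s => v j s + ε * (1 + s)) ⁻¹' Set.Iic 0) := by
        ext s
        simp only [hS, Set.mem_setOf_eq, Set.mem_iUnion, Set.mem_inter_iff,
          Set.mem_preimage, Set.mem_Iic]
        tauto
      rw [hrw]
      refine isClosed_biUnion_finset fun j hj => ?_
      have hcont : ContinuousOn (fun s => v j s + ε * (1 + s)) (Set.Icc 0 T) := by
        refine ContinuousOn.add (fun t ht => ?_) (by fun_prop)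
        exact (hode j hj t ht).continuousAt.continuousWithinAt
      exact hcont.preimage_isClosed_of_isClosed isClosed_Icc isClosed_Iic
    set t₀ : ℝ := sInf S with ht₀
    have ht₀S : t₀ ∈ S := hScl.csInf_mem hSne hSbdd
    obtain ⟨ht₀Icc, k₀, hk₀, hk₀le⟩ := ht₀S
    have ht₀pos : 0 < t₀ := by
      rcases lt_or_eq_of_le ht₀Icc.1 with h | h
      · exact h
      · exfalso
        have := hv0 k₀ hk₀
        rw [← h] at hk₀le
        simp only [add_zero] at hk₀le
        nlinarith
    -- points strictly before t₀ are not in S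
    have hbefore : ∀ s, 0 < s → s < t₀ → ∀ j ∈ K, 0 < v j s + ε * (1 + s) := by
      intro s hs0 hst j hj
      by_contra hle
      push_neg at hle
      have : s ∈ S := ⟨⟨le_of_lt hs0, le_trans (le_of_lt hst) ht₀Icc.2⟩, j, hj, hle⟩
      exact absurd (csInf_le hSbdd this) (not_le.2 hst)
    -- at t₀ everything is ≥ 0
    have hmin : ∀ j ∈ K, 0 ≤ v j t₀ + ε * (1 + t₀) := by
      intro j hj
      have hcont : Filter.Tendsto (fun s => v j s + ε * (1 + s)) (nhdsWithin t₀ (Set.Iio t₀))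
          (nhds (v j t₀ + ε * (1 + t₀))) := by
        have h1 : Filter.Tendsto (fun s => v j s + ε * (1 + s)) (nhds t₀)
            (nhds (v j t₀ + ε * (1 + t₀))) := by
          exact ((hode j hj t₀ ht₀Icc).continuousAt.tendsto).add
            (Filter.Tendsto.const_mul ε ((continuous_const.add continuous_id).tendsto t₀))
        exact h1.mono_left nhdsWithin_le_nhds
      refine ge_of_tendsto hcont ?_
      have hev : ∀ᶠ s in nhdsWithin t₀ (Set.Iio t₀), 0 < s := by
        refine eventually_nhdsWithin_of_eventually_nhds (eventually_gt_nhds ht₀pos)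
      filter_upwards [hev, self_mem_nhdsWithin] with s hs0 hst
      exact le_of_lt (hbefore s hs0 hst j hj)
    have hvk₀ : v k₀ t₀ + ε * (1 + t₀) = 0 := le_antisymm hk₀le (hmin k₀ hk₀)
    have hvk₀neg : v k₀ t₀ < 0 := by nlinarith [ht₀pos]
    -- derivative at t₀ is nonnegative
    set D : ℝ := (1/2) * (1 - 1/ξ) * v k₀ t₀ / (x k₀ t₀)^2
        + (1 / (2 * (N:ℝ))) * ∑ l ∈ K \ {k₀, -k₀}, (v l t₀ - v k₀ t₀) / (x l t₀ - x k₀ t₀)^2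
      with hDdef
    have hDnonneg : 0 ≤ D := by
      have ha : 0 ≤ (1/2) * (1 - 1/ξ) * v k₀ t₀ / (x k₀ t₀)^2 := by
        apply div_nonneg _ (sq_nonneg _)
        have h1 : (1:ℝ) ≤ 1/ξ := by
          rw [le_div_iff₀ hξ.1]
          simpa using hξ.2
        nlinarith
      have hb : 0 ≤ (1 / (2 * (N:ℝ))) *
          ∑ l ∈ K \ {k₀, -k₀}, (v l t₀ - v k₀ t₀) / (x l t₀ - x k₀ t₀)^2 := by
        apply mul_nonneg (by positivity)
        apply Finset.sum_nonneg
        intro l hl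
        have hlK : l ∈ K := (Finset.mem_sdiff.1 hl).1
        apply div_nonneg _ (sq_nonneg _)
        have := hmin l hlK
        linarith [hvk₀]
      exact add_nonneg ha hb
    have hD : HasDerivAt (v k₀) D t₀ := hode k₀ hk₀ t₀ ht₀Icc
    have hεder : HasDerivAt (fun s : ℝ => ε * (1 + s)) ε t₀ := by
      have : HasDerivAt (fun s : ℝ => 1 + s) 1 t₀ := (hasDerivAt_id t₀).const_add 1
      simpa using this.const_mul ε
    have hg : HasDerivAt (fun s => v k₀ s + ε * (1 + s)) (D + ε) t₀ := hD.add hεder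
    -- slope from the left is ≤ 0, contradicting D + ε > 0
    have hslope := hasDerivAt_iff_tendsto_slope.1 hg
    have hsl : Filter.Tendsto (slope (fun s => v k₀ s + ε * (1 + s)) t₀)
        (nhdsWithin t₀ (Set.Iio t₀)) (nhds (D + ε)) := by
      refine hslope.mono_left (nhdsWithin_mono _ ?_)
      intro s hs
      exact ne_of_lt hs
    have hle : D + ε ≤ 0 := by
      refine le_of_tendsto hsl ?_
      have hev : ∀ᶠ s in nhdsWithin t₀ (Set.Iio t₀), 0 < s :=
        eventually_nhdsWithin_of_eventually_nhds (eventually_gt_nhds ht₀pos)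
      filter_upwards [hev, self_mem_nhdsWithin] with s hs0 hst
      have hgpos : 0 < v k₀ s + ε * (1 + s) := hbefore s hs0 hst k₀ hk₀
      have : slope (fun s => v k₀ s + ε * (1 + s)) t₀ s
          = (v k₀ s + ε * (1 + s)) / (s - t₀) := by
        rw [slope_def_field]
        rw [hvk₀]
        ring_nf
      rw [this]
      exact le_of_lt (div_neg_of_pos_of_neg hgpos (sub_neg.2 hst))
    linarith
  -- conclude by letting ε → 0
  intro t ht k hk
  by_contra hneg
  push_neg at hneg
  have h1t : 0 < 1 + t := by linarith [ht.1]
  have hε : 0 < -v k t / (1 + t) := div_pos (by linarith) h1t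
  have := key (-v k t / (1 + t)) hε t ht k hk
  rw [div_mul_cancel₀ _ (ne_of_gt h1t)] at this
  linarith
end

section
/- Maximum principle, boundedness: Under the same hypotheses as the nonnegativity statement with v_k(0) ≥ 0 for all k, the maximum M(t) := max_k v_k(t) is non-increasing in t; in particular |v_k(t)| ≤ max_k v_k(0) for all t ∈ [0,T]. -/
open Finset

private lemma barrier_aux
    (N : ℕ) (ξ T : ℝ) (hξ : ξ ∈ Set.Ioc (0 : ℝ) 1)
    (K : Finset ℤ) (hKne : K.Nonempty)
    (x v : ℤ → ℝ → ℝ)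
    (hode : ∀ k ∈ K, ∀ t ∈ Set.Icc (0 : ℝ) T,
      HasDerivAt (v k)
        ((1/2) * (1 - 1/ξ) * v k t / (x k t)^2
          + (1 / (2 * N)) * ∑ l ∈ K \ {k, -k}, (v l t - v k t) / (x l t - x k t)^2) t)
    (s : ℝ) (hs : s ∈ Set.Icc (0 : ℝ) T) (B : ℝ) (hB : 0 ≤ B)
    (hvs : ∀ k ∈ K, v k s ≤ B) :
    ∀ t ∈ Set.Icc s T, ∀ k ∈ K, v k t ≤ B := by
  obtain ⟨hs0, hsT⟩ := hs
  have hsub : Set.Icc s T ⊆ Set.Icc 0 T := Set.Icc_subset_Icc hs0 le_rfl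
  have key : ∀ ε > (0:ℝ), ∀ t ∈ Set.Icc s T, ∀ k ∈ K, v k t < B + ε * (1 + t - s) := by
    intro ε hε
    by_contra hcon
    push_neg at hcon
    obtain ⟨t₂, ht₂, k₂, hk₂, hge⟩ := hcon
    set S : Set ℝ := ⋃ k ∈ (K : Set ℤ), (Set.Icc s T ∩
        (fun t => v k t - (B + ε * (1 + t - s))) ⁻¹' Set.Ici 0) with hS
    have hScl : IsClosed S := by
      refine Set.Finite.isClosed_biUnion K.finite_toSet (fun k hk => ?_)
      refine ContinuousOn.preimage_isClosed_of_isClosed ?_ isClosed_Icc isClosed_Ici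
      have hc : ContinuousOn (v k) (Set.Icc s T) := fun t ht =>
        ((hode k hk t (hsub ht)).continuousAt).continuousWithinAt
      exact hc.sub (by fun_prop)
    have hSsub : S ⊆ Set.Icc s T := by
      intro t ht; simp only [hS, Set.mem_iUnion] at ht; obtain ⟨k, _, ht, _⟩ := ht; exact ht
    have hmemS : ∀ t, t ∈ S ↔ t ∈ Set.Icc s T ∧ ∃ k ∈ K, B + ε * (1 + t - s) ≤ v k t := by
      intro t
      simp only [hS, Set.mem_iUnion, Set.mem_inter_iff, Set.mem_preimage, Set.mem_Ici,
        Finset.mem_coe, exists_prop, sub_nonneg]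
      constructor
      · rintro ⟨k, hk, ht, h⟩; exact ⟨ht, k, hk, h⟩
      · rintro ⟨ht, k, hk, h⟩; exact ⟨k, hk, ht, h⟩
    have hSne : S.Nonempty := ⟨t₂, (hmemS t₂).2 ⟨ht₂, k₂, hk₂, hge⟩⟩
    have hSbd : BddBelow S := ⟨s, fun t ht => (hSsub ht).1⟩
    set t₀ := sInf S with ht₀def
    have ht₀S : t₀ ∈ S := hScl.csInf_mem hSne hSbd
    obtain ⟨⟨hst₀, ht₀T⟩, k₀, hk₀, hk₀ge⟩ := (hmemS t₀).1 ht₀S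
    have hsnot : s ∉ S := by
      rw [hmemS]
      rintro ⟨-, k, hk, hge'⟩
      have := hvs k hk
      nlinarith
    have hslt : s < t₀ := lt_of_le_of_ne hst₀ (fun h => hsnot (h ▸ ht₀S))
    have hbefore : ∀ t ∈ Set.Ico s t₀, ∀ l ∈ K, v l t < B + ε * (1 + t - s) := by
      intro t ht l hl
      by_contra h
      push_neg at h
      have htS : t ∈ S := (hmemS t).2 ⟨⟨ht.1, le_trans ht.2.le ht₀T⟩, l, hl, h⟩
      exact absurd (csInf_le hSbd htS) (not_le.2 ht.2)
    obtain ⟨km, hkm, hmax⟩ := K.exists_max_image (fun l => v l t₀) hKne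
    have hkmge : B + ε * (1 + t₀ - s) ≤ v km t₀ := le_trans hk₀ge (hmax k₀ hk₀)
    have hkmpos : 0 < v km t₀ := by nlinarith
    have ht₀mem : t₀ ∈ Set.Icc (0:ℝ) T := ⟨le_trans hs0 hst₀, ht₀T⟩
    have hd := hode km hkm t₀ ht₀mem
    set d := (1/2) * (1 - 1/ξ) * v km t₀ / (x km t₀)^2
          + (1 / (2 * N)) * ∑ l ∈ K \ {km, -km}, (v l t₀ - v km t₀) / (x l t₀ - x km t₀)^2
      with hddef
    have hd0 : d ≤ 0 := by
      have h1 : (1:ℝ) - 1/ξ ≤ 0 := by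
        have : (1:ℝ) ≤ 1/ξ := (le_div_iff₀ hξ.1).2 (by linarith [hξ.2])
        linarith
      have hdiag : (1/2) * (1 - 1/ξ) * v km t₀ / (x km t₀)^2 ≤ 0 := by
        apply div_nonpos_of_nonpos_of_nonneg _ (sq_nonneg _)
        nlinarith
      have hsum : ∑ l ∈ K \ {km, -km}, (v l t₀ - v km t₀) / (x l t₀ - x km t₀)^2 ≤ 0 := by
        apply Finset.sum_nonpos
        intro l hl
        have hlK : l ∈ K := (Finset.mem_sdiff.1 hl).1
        exact div_nonpos_of_nonpos_of_nonneg (by linarith [hmax l hlK]) (sq_nonneg _)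
      have hc : (0:ℝ) ≤ 1 / (2 * N) := by positivity
      have hsum' : 1 / (2 * (N:ℝ)) *
          (∑ l ∈ K \ {km, -km}, (v l t₀ - v km t₀) / (x l t₀ - x km t₀)^2) ≤ 0 := by
        have := mul_le_mul_of_nonneg_left hsum hc
        simpa using this
      rw [hddef]
      linarith
    -- left slope is ≥ ε
    have hslope : Filter.Tendsto (slope (v km) t₀) (nhdsWithin t₀ (Set.Iio t₀)) (nhds d) := by
      have h' := hd.hasDerivWithinAt (s := Set.Iio t₀)
      rw [hasDerivWithinAt_iff_tendsto_slope] at h'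
      rwa [Set.diff_singleton_eq_self (by simp)] at h'
    have hev : ∀ᶠ t in nhdsWithin t₀ (Set.Iio t₀), ε ≤ slope (v km) t₀ t := by
      filter_upwards [Ico_mem_nhdsLT hslt] with t ht
      have h1 := hbefore t ht km hkm
      have hneg : t - t₀ < 0 := by linarith [ht.2]
      rw [slope_def_field]
      rw [le_div_iff_of_neg hneg]
      nlinarith
    have : ε ≤ d := ge_of_tendsto hslope hev
    linarith
  intro t ht k hk
  by_contra hlt
  push_neg at hlt
  have hpos : (0:ℝ) < 1 + t - s := by linarith [ht.1]
  have hε : (0:ℝ) < (v k t - B) / (1 + t - s) := div_pos (by linarith) hpos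
  have := key _ hε t ht k hk
  rw [div_mul_cancel₀ _ (ne_of_gt hpos)] at this
  linarith

private lemma nonneg_aux
    (N : ℕ) (ξ T : ℝ) (hξ : ξ ∈ Set.Ioc (0 : ℝ) 1)
    (K : Finset ℤ) (hKne : K.Nonempty)
    (x v : ℤ → ℝ → ℝ)
    (hode : ∀ k ∈ K, ∀ t ∈ Set.Icc (0 : ℝ) T,
      HasDerivAt (v k)
        ((1/2) * (1 - 1/ξ) * v k t / (x k t)^2
          + (1 / (2 * N)) * ∑ l ∈ K \ {k, -k}, (v l t - v k t) / (x l t - x k t)^2) t)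
    (hT : 0 ≤ T)
    (hv0 : ∀ k ∈ K, 0 ≤ v k 0) :
    ∀ t ∈ Set.Icc (0 : ℝ) T, ∀ k ∈ K, 0 ≤ v k t := by
  have hode' : ∀ k ∈ K, ∀ t ∈ Set.Icc (0 : ℝ) T,
      HasDerivAt (fun u => -(v k u))
        ((1/2) * (1 - 1/ξ) * (-(v k t)) / (x k t)^2
          + (1 / (2 * N)) * ∑ l ∈ K \ {k, -k}, ((-(v l t)) - (-(v k t))) / (x l t - x k t)^2) t := by
    intro k hk t ht
    have h := (hode k hk t ht).neg
    refine h.congr_deriv (Eq.symm ?_)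
    rw [Finset.sum_congr rfl (fun l _ => by
      show ((-(v l t)) - (-(v k t))) / (x l t - x k t)^2 = -((v l t - v k t) / (x l t - x k t)^2)
      ring)]
    rw [Finset.sum_neg_distrib]
    ring
  have := barrier_aux N ξ T hξ K hKne x (fun k u => -(v k u)) hode' 0 ⟨le_rfl, hT⟩ 0 le_rfl
    (fun k hk => by simpa using hv0 k hk)
  intro t ht k hk
  have h2 : -(v k t) ≤ 0 := this t ht k hk
  linarith

/-- Maximum principle (boundedness): the running maximum `M(t) = max_k v_k(t)` is
non-increasing; in particular `|v_k(t)| ≤ max_k v_k(0)`. -/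
theorem max_principle_bounded
    (N : ℕ) (hN : 1 ≤ N) (ξ T : ℝ) (hξ : ξ ∈ Set.Ioc (0 : ℝ) 1) (hT : 0 ≤ T)
    (K : Finset ℤ) (hK : K = Finset.Icc (-(N : ℤ)) N \ {0}) (hKne : K.Nonempty)
    (x v : ℤ → ℝ → ℝ)
    (hxcont : ∀ k ∈ K, ContinuousOn (x k) (Set.Icc 0 T))
    (hxne : ∀ t ∈ Set.Icc (0 : ℝ) T, ∀ k ∈ K, ∀ l ∈ K, k ≠ l → k ≠ -l →
      x k t ≠ x l t)
    (hx0 : ∀ t ∈ Set.Icc (0 : ℝ) T, ∀ k ∈ K, x k t ≠ 0)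
    (hode : ∀ k ∈ K, ∀ t ∈ Set.Icc (0 : ℝ) T,
      HasDerivAt (v k)
        ((1/2) * (1 - 1/ξ) * v k t / (x k t)^2
          + (1 / (2 * N)) * ∑ l ∈ K \ {k, -k}, (v l t - v k t) / (x l t - x k t)^2) t)
    (hv0 : ∀ k ∈ K, 0 ≤ v k 0) :
    (∀ s ∈ Set.Icc (0 : ℝ) T, ∀ t ∈ Set.Icc (0 : ℝ) T, s ≤ t →
        K.sup' hKne (fun k => v k t) ≤ K.sup' hKne (fun k => v k s)) ∧
    (∀ t ∈ Set.Icc (0 : ℝ) T, ∀ k ∈ K, |v k t| ≤ K.sup' hKne (fun k => v k 0)) := by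
  have hnn := nonneg_aux N ξ T hξ K hKne x v hode hT hv0
  have hmono : ∀ s ∈ Set.Icc (0 : ℝ) T, ∀ t ∈ Set.Icc (0 : ℝ) T, s ≤ t →
      K.sup' hKne (fun k => v k t) ≤ K.sup' hKne (fun k => v k s) := by
    intro s hsmem t htmem hst
    have hB : 0 ≤ K.sup' hKne (fun k => v k s) := by
      obtain ⟨k, hk⟩ := hKne
      exact le_trans (hnn s hsmem k hk) (Finset.le_sup' (f := fun k => v k s) hk)
    have hbar := barrier_aux N ξ T hξ K hKne x v hode s hsmem _ hB
      (fun k hk => Finset.le_sup' (f := fun k => v k s) hk)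
    exact Finset.sup'_le _ _ (fun k hk => hbar t ⟨hst, htmem.2⟩ k hk)
  refine ⟨hmono, fun t htmem k hk => ?_⟩
  rw [abs_of_nonneg (hnn t htmem k hk)]
  exact le_trans (Finset.le_sup' (f := fun k => v k t) hk) (hmono 0 ⟨le_rfl, hT⟩ t htmem htmem.1)
end

section
/- Comparison/domination principle: Let u_k and v_k both solve the linear ODE system v_k' = (1/2)(1 - 1/ξ) v_k/x_k² + (1/(2N)) Σ_{l ≠ ±k} (v_l - v_k)/(x_l - x_k)² on [0,T], with v_k(0) = |u_k(0)| for all k. Then |u_k(t)| ≤ v_k(t) for all t ∈ [0,T] and all k. -/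
open Finset

/-- Signed difference `±u - v`. -/
noncomputable def cmpW (u v : ℤ → ℝ → ℝ) (p : ℤ × Bool) (t : ℝ) : ℝ :=
  (if p.2 then (1 : ℝ) else -1) * u p.1 t - v p.1 t

/-- The right-hand side of the linear ODE for `cmpW`. -/
noncomputable def cmpD (N : ℕ) (ξ : ℝ) (K : Finset ℤ) (x u v : ℤ → ℝ → ℝ)
    (p : ℤ × Bool) (t : ℝ) : ℝ :=
  (1/2) * (1 - 1/ξ) * cmpW u v p t / (x p.1 t)^2
    + (1 / (2 * N)) * ∑ l ∈ K \ {p.1, -p.1},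
        (cmpW u v (l, p.2) t - cmpW u v p t) / (x l t - x p.1 t)^2

/-- Comparison/domination principle: if `u` and `v` both solve the linear system and
`v_k(0) = |u_k(0)|`, then `|u_k(t)| ≤ v_k(t)`. -/
theorem comparison_principle
    (N : ℕ) (hN : 1 ≤ N) (ξ T : ℝ) (hξ : ξ ∈ Set.Ioc (0 : ℝ) 1) (hT : 0 ≤ T)
    (K : Finset ℤ) (hK : K = Finset.Icc (-(N : ℤ)) N \ {0})
    (x u v : ℤ → ℝ → ℝ)
    (hxcont : ∀ k ∈ K, ContinuousOn (x k) (Set.Icc 0 T))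
    (hxne : ∀ t ∈ Set.Icc (0 : ℝ) T, ∀ k ∈ K, ∀ l ∈ K, k ≠ l → k ≠ -l →
      x k t ≠ x l t)
    (hx0 : ∀ t ∈ Set.Icc (0 : ℝ) T, ∀ k ∈ K, x k t ≠ 0)
    (hodeu : ∀ k ∈ K, ∀ t ∈ Set.Icc (0 : ℝ) T,
      HasDerivAt (u k)
        ((1/2) * (1 - 1/ξ) * u k t / (x k t)^2
          + (1 / (2 * N)) * ∑ l ∈ K \ {k, -k}, (u l t - u k t) / (x l t - x k t)^2) t)
    (hodev : ∀ k ∈ K, ∀ t ∈ Set.Icc (0 : ℝ) T,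
      HasDerivAt (v k)
        ((1/2) * (1 - 1/ξ) * v k t / (x k t)^2
          + (1 / (2 * N)) * ∑ l ∈ K \ {k, -k}, (v l t - v k t) / (x l t - x k t)^2) t)
    (hinit : ∀ k ∈ K, v k 0 = |u k 0|) :
    ∀ t ∈ Set.Icc (0 : ℝ) T, ∀ k ∈ K, |u k t| ≤ v k t := by
  classical
  obtain ⟨hξ0, hξ1⟩ := hξ
  set S : Finset (ℤ × Bool) := K ×ˢ Finset.univ with hS
  have hmemS : ∀ k ∈ K, ∀ b : Bool, (k, b) ∈ S := by
    intro k hk b; simp [hS, hk]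
  have h1K : (1 : ℤ) ∈ K := by
    rw [hK]; simp only [Finset.mem_sdiff, Finset.mem_Icc, Finset.mem_singleton]
    omega
  have hSne : S.Nonempty := ⟨(1, true), hmemS 1 h1K true⟩
  set W : ℤ × Bool → ℝ → ℝ := cmpW u v with hW
  set d : ℤ × Bool → ℝ → ℝ := cmpD N ξ K x u v with hd
  -- each W p solves the same linear ODE
  have hderiv : ∀ p ∈ S, ∀ t ∈ Set.Icc (0:ℝ) T, HasDerivAt (W p) (d p t) t := by
    rintro ⟨k, b⟩ hp t ht
    have hk : k ∈ K := (Finset.mem_product.1 hp).1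
    set σ : ℝ := if b then (1:ℝ) else -1 with hσ
    have H := ((hodeu k hk t ht).const_mul σ).sub (hodev k hk t ht)
    have hfun : W (k, b) = fun s => σ * u k s - v k s := by
      funext s; simp [hW, cmpW, hσ]
    rw [hfun]
    refine H.congr_deriv (Eq.symm ?_)
    have key : ∀ l : ℤ, (W (l, b) t - W (k, b) t) / (x l t - x k t)^2
        = σ * ((u l t - u k t) / (x l t - x k t)^2)
          - (v l t - v k t) / (x l t - x k t)^2 := by
      intro l
      have h1 : W (l, b) t - W (k, b) t
          = σ * (u l t - u k t) - (v l t - v k t) := by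
        simp only [hW, cmpW, hσ]; ring
      rw [h1, sub_div, mul_div_assoc]
    simp only [hd, cmpD]
    rw [Finset.sum_congr rfl fun l _ => key l]
    rw [Finset.sum_sub_distrib, ← Finset.mul_sum]
    have h2 : cmpW u v (k, b) t = σ * u k t - v k t := by simp [cmpW, hσ]
    rw [h2]; ring
  have hwcont : ∀ p ∈ S, ContinuousOn (W p) (Set.Icc 0 T) := fun p hp s hs =>
    (hderiv p hp s hs).continuousAt.continuousWithinAt
  set D : ℝ → ℝ := fun t => S.sup' hSne fun p => W p t with hD
  have hDcont : ContinuousOn D (Set.Icc 0 T) :=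
    ContinuousOn.finset_sup'_apply hSne hwcont
  have hwle : ∀ t, ∀ p ∈ S, W p t ≤ D t := fun t p hp =>
    Finset.le_sup' (fun q => W q t) hp
  have hD0 : D 0 ≤ 0 := by
    apply Finset.sup'_le
    rintro ⟨k, b⟩ hp
    have hk : k ∈ K := (Finset.mem_product.1 hp).1
    have := hinit k hk
    simp only [hW, cmpW]
    cases b <;> simp [this] <;> [linarith [neg_abs_le (u k 0)]; linarith [le_abs_self (u k 0)]]
  -- argmax set and pointwise derivative bound
  have hAne : ∀ t : ℝ, (S.filter fun p => W p t = D t).Nonempty := by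
    intro t
    obtain ⟨p, hp, he⟩ := Finset.exists_mem_eq_sup' hSne (fun q => W q t)
    exact ⟨p, Finset.mem_filter.2 ⟨hp, he.symm⟩⟩
  set f' : ℝ → ℝ := fun t => (S.filter fun p => W p t = D t).sup' (hAne t) fun p => d p t
    with hf'def
  -- liminf slope condition, valid at every point
  have hf' : ∀ t ∈ Set.Ico (0:ℝ) T, ∀ r, f' t < r →
      ∃ᶠ z in nhdsWithin t (Set.Ioi t), slope D t z < r := by
    intro t ht r hr
    have htI : t ∈ Set.Icc (0:ℝ) T := Set.mem_Icc_of_Ico ht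
    have Hev : ∀ p ∈ S, ∀ᶠ z in nhdsWithin t (Set.Ioi t),
        W p z < D t + r * (z - t) := by
      intro p hp
      by_cases hmax : W p t = D t
      · have hdp := hderiv p hp t htI
        have hdlt : d p t < r :=
          lt_of_le_of_lt
            (Finset.le_sup' (fun q => d q t) (Finset.mem_filter.2 ⟨hp, hmax⟩)) hr
        have hslope : Filter.Tendsto (slope (W p) t) (nhdsWithin t (Set.Ioi t))
            (nhds (d p t)) :=
          (hasDerivAt_iff_tendsto_slope.1 hdp).mono_left
            (nhdsWithin_mono t fun z hz => Set.mem_compl_singleton_iff.2 (ne_of_gt hz))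
        have h1 : ∀ᶠ z in nhdsWithin t (Set.Ioi t), slope (W p) t z < r :=
          hslope.eventually_lt_const hdlt
        filter_upwards [h1, self_mem_nhdsWithin] with z h1z h2z
        have hzt : (0:ℝ) < z - t := sub_pos.2 h2z
        rw [slope_def_field, div_lt_iff₀ hzt] at h1z
        have := hmax ▸ h1z
        linarith
      · have hlt : W p t < D t := lt_of_le_of_ne (hwle t p hp) hmax
        have hc : ContinuousAt (W p) t := (hderiv p hp t htI).continuousAt
        have hc2 : Filter.Tendsto (fun z => W p z - r * (z - t)) (nhds t)
            (nhds (W p t - r * (t - t))) :=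
          hc.sub ((continuousAt_const.mul ((continuousAt_id).sub continuousAt_const)))
        have hval : W p t - r * (t - t) < D t := by simp [hlt]
        have h1 : ∀ᶠ z in nhds t, W p z - r * (z - t) < D t :=
          hc2.eventually_lt_const hval
        filter_upwards [h1.filter_mono nhdsWithin_le_nhds] with z hz
        linarith
    have Hall : ∀ᶠ z in nhdsWithin t (Set.Ioi t),
        ∀ p ∈ S, W p z < D t + r * (z - t) := (Finset.eventually_all S).2 Hev
    refine ((Hall.and self_mem_nhdsWithin).mono ?_).frequently
    rintro z ⟨hz1, hz2⟩
    have hzt : (0:ℝ) < z - t := sub_pos.2 hz2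
    rw [slope_def_field, div_lt_iff₀ hzt]
    have hzD : D z < D t + r * (z - t) := (Finset.sup'_lt_iff hSne).2 hz1
    linarith
  -- the ε-barrier argument
  have main : ∀ ε : ℝ, 0 < ε → ∀ t ∈ Set.Icc (0:ℝ) T, D t ≤ ε * (1 + t) := by
    intro ε hε
    have hB : ∀ z : ℝ, HasDerivAt (fun s : ℝ => ε * (1 + s)) ε z := by
      intro z
      simpa using ((hasDerivAt_id z).const_add (1:ℝ)).const_mul ε
    have ha : D 0 ≤ ε * (1 + 0) := by
      have : ε * (1 + 0) = ε := by ring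
      rw [this]; linarith
    have bound : ∀ s ∈ Set.Ico (0:ℝ) T, D s = ε * (1 + s) → f' s < ε := by
      intro s hs hDs
      have hsI : s ∈ Set.Icc (0:ℝ) T := Set.mem_Icc_of_Ico hs
      have hDpos : 0 < D s := by
        rw [hDs]; have := hs.1; positivity
      apply (Finset.sup'_lt_iff (hAne s)).2
      rintro ⟨k, b⟩ hpf
      obtain ⟨hp, hmax⟩ := Finset.mem_filter.1 hpf
      have hk : k ∈ K := (Finset.mem_product.1 hp).1
      have hdnp : d (k, b) s ≤ 0 := by
        have hx2 : (0:ℝ) < (x k s)^2 :=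
          pow_two_pos_of_ne_zero (hx0 s hsI k hk)
        have hc1 : (1/2 : ℝ) * (1 - 1/ξ) ≤ 0 := by
          have h1 : (1:ℝ) ≤ 1/ξ := by
            rw [le_div_iff₀ hξ0]; linarith
          nlinarith
        have term1 : (1/2) * (1 - 1/ξ) * W (k, b) s / (x k s)^2 ≤ 0 := by
          apply div_nonpos_iff.mpr
          right
          constructor
          · have : 0 < W (k, b) s := hmax ▸ hDpos
            nlinarith
          · positivity
        have term2 : (1 / (2 * (N:ℝ))) * ∑ l ∈ K \ {k, -k},
            (W (l, b) s - W (k, b) s) / (x l s - x k s)^2 ≤ 0 := by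
          apply mul_nonpos_of_nonneg_of_nonpos
          · positivity
          · apply Finset.sum_nonpos
            intro l hl
            have hlK : l ∈ K := (Finset.mem_sdiff.1 hl).1
            have hle : W (l, b) s ≤ W (k, b) s := by
              rw [hmax]; exact hwle s (l, b) (hmemS l hlK b)
            apply div_nonpos_iff.mpr
            right
            exact ⟨by linarith, sq_nonneg _⟩
        have : d (k, b) s = (1/2) * (1 - 1/ξ) * W (k, b) s / (x k s)^2
            + (1 / (2 * (N:ℝ))) * ∑ l ∈ K \ {k, -k},
                (W (l, b) s - W (k, b) s) / (x l s - x k s)^2 := by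
          simp [hd, cmpD, hW]
        rw [this]
        linarith
      linarith
    intro t ht
    exact image_le_of_liminf_slope_right_lt_deriv_boundary hDcont hf' ha hB bound ht
  -- pass to the limit ε → 0
  have hDle : ∀ t ∈ Set.Icc (0:ℝ) T, D t ≤ 0 := by
    intro t ht
    by_contra h
    push_neg at h
    have h1t : (0:ℝ) < 1 + t := by linarith [ht.1]
    have hm := main (D t / (2 * (1 + t))) (by positivity) t ht
    have : D t / (2 * (1 + t)) * (1 + t) = D t / 2 := by
      field_simp
    rw [this] at hm
    linarith
  intro t ht k hk
  have h1 : W (k, true) t ≤ 0 := le_trans (hwle t (k, true) (hmemS k hk true)) (hDle t ht)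
  have h2 : W (k, false) t ≤ 0 := le_trans (hwle t (k, false) (hmemS k hk false)) (hDle t ht)
  norm_num [hW, cmpW] at h1 h2
  rw [abs_le]
  constructor <;> [linarith; linarith]
end

section
/- If the non-increasing function f(t) := min_k v_k(t) of a C¹ solution (v_k) of the system v_k' = (1/2)(1 − 1/ξ) v_k/x_k² + (1/(2N)) Σ_{l ≠ ±k} (v_l − v_k)/(x_l − x_k)² satisfies f(0) ≥ 0, and the coefficient c(t) := (1/2)(1 − 1/ξ)/x₁(t)² is continuous and bounded below, then f satisfies the differential inequality f'(t) ≥ c(t) f(t) at every point where f is differentiable, and consequently f(t) ≥ f(0)·exp(∫₀ᵗ c(s) ds) ≥ 0 for all t. -/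
open Finset

set_option maxHeartbeats 1600000 in
/-- Grönwall-type lower bound for the minimum `f(t) = min_k v_k(t)`: the differential
inequality `f' ≥ c f` holds wherever `f` is differentiable, and consequently
`f(t) ≥ f(0)·exp(∫₀ᵗ c) ≥ 0`. -/
theorem min_gronwall_lower_bound
    (N : ℕ) (hN : 1 ≤ N) (ξ T : ℝ) (hξ : ξ ∈ Set.Ioc (0 : ℝ) 1) (hT : 0 ≤ T)
    (K : Finset ℤ) (hK : K = Finset.Icc (-(N : ℤ)) N \ {0}) (hKne : K.Nonempty)
    (x v : ℤ → ℝ → ℝ)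
    (hxcont : ∀ k ∈ K, ContinuousOn (x k) (Set.Icc 0 T))
    (hxne : ∀ t ∈ Set.Icc (0 : ℝ) T, ∀ k ∈ K, ∀ l ∈ K, k ≠ l → k ≠ -l →
      x k t ≠ x l t)
    (hx0 : ∀ t ∈ Set.Icc (0 : ℝ) T, ∀ k ∈ K, x k t ≠ 0)
    (hode : ∀ k ∈ K, ∀ t ∈ Set.Icc (0 : ℝ) T,
      HasDerivAt (v k)
        ((1/2) * (1 - 1/ξ) * v k t / (x k t)^2
          + (1 / (2 * N)) * ∑ l ∈ K \ {k, -k}, (v l t - v k t) / (x l t - x k t)^2) t)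
    (c : ℝ → ℝ)
    (hc : ∀ t, c t = (1/2) * (1 - 1/ξ) / (K.inf' hKne fun k => (x k t)^2))
    (hccont : ContinuousOn c (Set.Icc 0 T))
    (hcbdd : ∃ B : ℝ, ∀ t ∈ Set.Icc (0 : ℝ) T, B ≤ c t)
    (f : ℝ → ℝ) (hf : ∀ t, f t = K.inf' hKne fun k => v k t)
    (hf0 : 0 ≤ f 0) :
    (∀ t ∈ Set.Icc (0 : ℝ) T, ∀ f' : ℝ, HasDerivAt f f' t → c t * f t ≤ f') ∧
    (∀ t ∈ Set.Icc (0 : ℝ) T,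
      f 0 * Real.exp (∫ s in (0 : ℝ)..t, c s) ≤ f t ∧ 0 ≤ f t) := by
  classical
  obtain ⟨hξ0, hξ1⟩ := hξ
  have ha : (1/2 : ℝ) * (1 - 1/ξ) ≤ 0 := by
    have h1 : (1:ℝ) ≤ 1/ξ := by
      rw [le_div_iff₀ hξ0]; linarith
    nlinarith
  -- the right-hand side of the ODE
  set F : ℤ → ℝ → ℝ := fun k t =>
    (1/2) * (1 - 1/ξ) * v k t / (x k t)^2
      + (1 / (2 * N)) * ∑ l ∈ K \ {k, -k}, (v l t - v k t) / (x l t - x k t)^2 with hFdef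
  -- positivity of the minimum of the squares
  have hm : ∀ t ∈ Set.Icc (0:ℝ) T, 0 < K.inf' hKne fun k => (x k t)^2 := by
    intro t ht
    obtain ⟨k, hk, hkeq⟩ := K.exists_mem_eq_inf' hKne (fun k => (x k t)^2)
    rw [hkeq]
    exact lt_of_le_of_ne (sq_nonneg _) (Ne.symm (pow_ne_zero 2 (hx0 t ht k hk)))
  have hm_le : ∀ t, ∀ k ∈ K, (K.inf' hKne fun k => (x k t)^2) ≤ (x k t)^2 :=
    fun t k hk => Finset.inf'_le _ hk
  have hc0 : ∀ t ∈ Set.Icc (0:ℝ) T, c t ≤ 0 := by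
    intro t ht
    rw [hc t]
    exact div_nonpos_iff.2 (Or.inr ⟨ha, (hm t ht).le⟩)
  -- f is below each v_k
  have hfle : ∀ s, ∀ k ∈ K, f s ≤ v k s := by
    intro s k hk; rw [hf s]; exact Finset.inf'_le _ hk
  -- key estimates at an active (minimizing) index
  have hsum : ∀ t ∈ Set.Icc (0:ℝ) T, ∀ k ∈ K, v k t = f t →
      (1/2) * (1 - 1/ξ) * v k t / (x k t)^2 ≤ F k t := by
    intro t ht k hk hact
    have hs : 0 ≤ ∑ l ∈ K \ {k, -k}, (v l t - v k t) / (x l t - x k t)^2 := by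
      refine Finset.sum_nonneg fun l hl => ?_
      have hlK : l ∈ K := (Finset.mem_sdiff.1 hl).1
      refine div_nonneg ?_ (sq_nonneg _)
      have := hfle t l hlK
      rw [hact]; linarith
    have hN' : (0:ℝ) ≤ 1 / (2 * N) := by positivity
    have := mul_nonneg hN' hs
    rw [hFdef]; dsimp only; linarith
  have hkey_pos : ∀ t ∈ Set.Icc (0:ℝ) T, ∀ k ∈ K, v k t = f t → 0 ≤ f t →
      c t * f t ≤ F k t := by
    intro t ht k hk hact hft
    refine le_trans ?_ (hsum t ht k hk hact)
    rw [hact, hc t]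
    have hnum : (1/2 : ℝ) * (1 - 1/ξ) * f t ≤ 0 :=
      mul_nonpos_iff.2 (Or.inr ⟨ha, hft⟩)
    have h1 : (0:ℝ) < K.inf' hKne fun k => (x k t)^2 := hm t ht
    have h2 := hm_le t k hk
    have hxk : (0:ℝ) < (x k t)^2 := lt_of_lt_of_le h1 h2
    rw [div_mul_eq_mul_div, div_le_div_iff₀ h1 hxk]
    nlinarith [mul_le_mul_of_nonpos_left h2 hnum]
  have hkey_neg : ∀ t ∈ Set.Icc (0:ℝ) T, ∀ k ∈ K, v k t = f t → f t ≤ 0 →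
      0 ≤ F k t := by
    intro t ht k hk hact hft
    refine le_trans ?_ (hsum t ht k hk hact)
    rw [hact]
    have h0 : 0 ≤ (1/2) * (1 - 1/ξ) * f t := by nlinarith
    exact div_nonneg h0 (sq_nonneg _)
  -- continuity of f on [0, T]
  have hvc : ∀ k ∈ K, ∀ t ∈ Set.Icc (0:ℝ) T, ContinuousAt (v k) t :=
    fun k hk t ht => (hode k hk t ht).continuousAt
  have hfc : ContinuousOn f (Set.Icc 0 T) := by
    intro t ht
    have : ContinuousAt f t := by
      have : ContinuousAt (fun s => K.inf' hKne fun k => v k s) t :=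
        ContinuousAt.finset_inf'_apply hKne fun k hk => hvc k hk t ht
      exact this.congr (Filter.Eventually.of_forall fun s => (hf s).symm)
    exact this.continuousWithinAt
  -- the negated minimum and its upper Dini derivative bound
  set g : ℝ → ℝ := fun t => -f t with hgdef
  set D : ℝ → ℝ := fun t => K.sup' hKne fun k => if v k t = f t then -F k t else 0
    with hDdef
  have hgc : ContinuousOn g (Set.Icc 0 T) := hfc.neg
  -- Dini-type slope bound for g
  have hDini : ∀ x₀ ∈ Set.Ico (0:ℝ) T, ∀ r, D x₀ < r →
      ∃ᶠ z in nhdsWithin x₀ (Set.Ioi x₀), slope g x₀ z < r := by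
    intro x₀ hx₀ r hr
    have hx₀' : x₀ ∈ Set.Icc (0:ℝ) T := Set.Ico_subset_Icc_self hx₀
    have hev : ∀ k ∈ K, ∀ᶠ z in nhdsWithin x₀ (Set.Ioi x₀),
        -v k z - g x₀ < r * (z - x₀) := by
      intro k hk
      by_cases hact : v k x₀ = f x₀
      · -- active index: use the derivative
        have hlt : -F k x₀ < r := by
          refine lt_of_le_of_lt ?_ hr
          have := Finset.le_sup' (fun k => if v k x₀ = f x₀ then -F k x₀ else 0) hk
          rw [if_pos hact] at this
          exact this
        have hdv : HasDerivAt (fun z => -v k z) (-F k x₀) x₀ := (hode k hk x₀ hx₀').neg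
        have hslope : Filter.Tendsto (slope (fun z => -v k z) x₀)
            (nhdsWithin x₀ {x₀}ᶜ) (nhds (-F k x₀)) :=
          hasDerivAt_iff_tendsto_slope.1 hdv
        have hslope' : Filter.Tendsto (slope (fun z => -v k z) x₀)
            (nhdsWithin x₀ (Set.Ioi x₀)) (nhds (-F k x₀)) :=
          hslope.mono_left (nhdsWithin_mono _ fun z hz => ne_of_gt hz)
        have hev' := hslope'.eventually_lt_const hlt
        filter_upwards [hev', self_mem_nhdsWithin] with z hz hz'
        have hzx : x₀ < z := hz'
        rw [slope_def_field, div_lt_iff₀ (by linarith : (0:ℝ) < z - x₀)] at hz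
        have hg : g x₀ = -v k x₀ := by
          rw [hgdef]; dsimp only; rw [hact]
        rw [hg]; linarith [hz]
      · -- inactive index: strict gap
        have hflt : f x₀ < v k x₀ :=
          lt_of_le_of_ne (hfle x₀ k hk) (fun h => hact h.symm)
        have hlim : -v k x₀ - g x₀ < 0 := by
          rw [hgdef]; dsimp only; linarith
        have h1 : Filter.Tendsto (fun z => -v k z - g x₀)
            (nhdsWithin x₀ (Set.Ioi x₀)) (nhds (-v k x₀ - g x₀)) := by
          have : ContinuousAt (fun z => -v k z - g x₀) x₀ :=
            ((hvc k hk x₀ hx₀').neg).sub continuousAt_const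
          exact this.continuousWithinAt.tendsto
        have h2 : Filter.Tendsto (fun z => r * (z - x₀))
            (nhdsWithin x₀ (Set.Ioi x₀)) (nhds 0) := by
          have hca : ContinuousAt (fun z => r * (z - x₀)) x₀ := by fun_prop
          have h : Filter.Tendsto (fun z => r * (z - x₀))
              (nhdsWithin x₀ (Set.Ioi x₀)) (nhds (r * (x₀ - x₀))) :=
            hca.continuousWithinAt
          simpa using h
        exact h1.eventually_lt h2 hlim
    have hall : ∀ᶠ z in nhdsWithin x₀ (Set.Ioi x₀),
        ∀ k ∈ K, -v k z - g x₀ < r * (z - x₀) := (Filter.eventually_all_finset K).2 hev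
    have : ∀ᶠ z in nhdsWithin x₀ (Set.Ioi x₀), slope g x₀ z < r := by
      filter_upwards [hall, self_mem_nhdsWithin] with z hz hz'
      have hzx : x₀ < z := hz'
      obtain ⟨k, hk, hkeq⟩ := K.exists_mem_eq_inf' hKne (fun k => v k z)
      have hgz : g z = -v k z := by rw [hgdef]; dsimp only; rw [hf z, hkeq]
      have hlt : g z - g x₀ < r * (z - x₀) := by
        have := hz k hk; rw [hgz]; linarith
      rw [slope_def_field, div_lt_iff₀ (by linarith : (0:ℝ) < z - x₀)]
      linarith [hlt]
    exact this.frequently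
  clear_value F g D
  -- a continuous extension of c to all of ℝ
  set cc : ℝ → ℝ := fun s => c (max 0 (min T s)) with hccdef
  have hmap : ∀ s : ℝ, max 0 (min T s) ∈ Set.Icc (0:ℝ) T := by
    intro s
    constructor
    · exact le_max_left _ _
    · exact max_le hT (min_le_left _ _)
  have hcc_cont : Continuous cc := by
    refine hccont.comp_continuous (by fun_prop) hmap
  have hcc_eq : ∀ s ∈ Set.Icc (0:ℝ) T, cc s = c s := by
    intro s hs
    rw [hccdef]; dsimp only
    rw [min_eq_right hs.2, max_eq_right hs.1]
  -- primitive of cc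
  set E : ℝ → ℝ := fun y => ∫ s in (0:ℝ)..y, cc s with hEdef
  have hEderiv : ∀ y, HasDerivAt E (cc y) y :=
    fun y => (hcc_cont.integral_hasStrictDerivAt 0 y).hasDerivAt
  have hEcont : Continuous E :=
    continuous_iff_continuousAt.2 fun y => (hEderiv y).continuousAt
  have hEeq : ∀ t ∈ Set.Icc (0:ℝ) T, (∫ s in (0:ℝ)..t, c s) = E t := by
    intro t ht
    rw [hEdef]
    refine intervalIntegral.integral_congr fun s hs => ?_
    have hsub : Set.uIcc (0:ℝ) t ⊆ Set.Icc 0 T := by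
      rw [Set.uIcc_of_le ht.1]
      exact Set.Icc_subset_Icc le_rfl ht.2
    exact (hcc_eq s (hsub hs)).symm
  clear_value cc E
  -- the barrier argument, for every ε > 0
  have main : ∀ ε : ℝ, 0 < ε → ∀ t ∈ Set.Icc (0:ℝ) T,
      g t ≤ -f 0 * Real.exp (E t) + ε * Real.exp t := by
    intro ε hε
    set B : ℝ → ℝ := fun y => -f 0 * Real.exp (E y) + ε * Real.exp y with hBdef
    set B' : ℝ → ℝ := fun y => -f 0 * (Real.exp (E y) * cc y) + ε * Real.exp y
      with hB'def
    have hBderiv : ∀ y, HasDerivAt B (B' y) y := by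
      intro y
      have h1 : HasDerivAt (fun z => Real.exp (E z)) (Real.exp (E y) * cc y) y :=
        (hEderiv y).exp
      have h2 : HasDerivAt Real.exp (Real.exp y) y := Real.hasDerivAt_exp y
      exact (h1.const_mul (-f 0)).add (h2.const_mul ε)
    have hBcont : ContinuousOn B (Set.Icc 0 T) :=
      (continuous_iff_continuousAt.2 fun y => (hBderiv y).continuousAt).continuousOn
    clear_value B B'
    have ha0 : g 0 ≤ B 0 := by
      rw [hgdef, hBdef]; dsimp only
      rw [hEdef]; dsimp only
      rw [intervalIntegral.integral_same, Real.exp_zero]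
      linarith
    have hbound : ∀ x₀ ∈ Set.Ico (0:ℝ) T, g x₀ = B x₀ → D x₀ < B' x₀ := by
      intro x₀ hx₀ hgB
      have hx₀' : x₀ ∈ Set.Icc (0:ℝ) T := Set.Ico_subset_Icc_self hx₀
      have hc0' : c x₀ ≤ 0 := hc0 x₀ hx₀'
      have hcc0 : cc x₀ ≤ 0 := by rw [hcc_eq x₀ hx₀']; exact hc0'
      have hexpE : (0:ℝ) < Real.exp (E x₀) := Real.exp_pos _
      have hexpx : (0:ℝ) < Real.exp x₀ := Real.exp_pos _
      have hB'pos : 0 < B' x₀ := by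
        rw [hB'def]; dsimp only
        have h1 : 0 ≤ -f 0 * (Real.exp (E x₀) * cc x₀) := by
          nlinarith [mul_nonneg hf0 (mul_nonneg hexpE.le (neg_nonneg.2 hcc0))]
        nlinarith
      rw [hDdef]; dsimp only
      rw [Finset.sup'_lt_iff]
      intro k hk
      by_cases hact : v k x₀ = f x₀
      · rw [if_pos hact]
        rcases le_or_gt 0 (f x₀) with hft | hft
        · -- nonnegative case: -F ≤ c·g
          have h1 : c x₀ * f x₀ ≤ F k x₀ := hkey_pos x₀ hx₀' k hk hact hft
          have h2 : -F k x₀ ≤ c x₀ * g x₀ := by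
            rw [hgdef]; dsimp only; linarith [h1]
          have h3 : c x₀ * g x₀ < B' x₀ := by
            rw [hgB, hBdef, hB'def]; dsimp only
            have hterm : c x₀ * (ε * Real.exp x₀) < ε * Real.exp x₀ := by
              have hpos : 0 < ε * Real.exp x₀ := mul_pos hε hexpx
              nlinarith
            have heq : cc x₀ = c x₀ := hcc_eq x₀ hx₀'
            rw [heq]
            nlinarith [hterm]
          linarith
        · -- negative case: -F ≤ 0 < B'
          have h1 : 0 ≤ F k x₀ := hkey_neg x₀ hx₀' k hk hact hft.le
          linarith
      · rw [if_neg hact]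
        exact hB'pos
    have := image_le_of_liminf_slope_right_lt_deriv_boundary' hgc hDini ha0 hBcont
      (fun y _ => (hBderiv y).hasDerivWithinAt) hbound
    intro t ht
    have h := this ht
    rw [hBdef] at h
    exact h
  -- conclusion of part 2
  have part2 : ∀ t ∈ Set.Icc (0:ℝ) T,
      f 0 * Real.exp (∫ s in (0:ℝ)..t, c s) ≤ f t ∧ 0 ≤ f t := by
    intro t ht
    have hlow : f 0 * Real.exp (E t) ≤ f t := by
      by_contra hcon
      push_neg at hcon
      set δ : ℝ := (f 0 * Real.exp (E t) - f t) / (2 * Real.exp t) with hδdef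
      have hδpos : 0 < δ := div_pos (by linarith) (by positivity)
      have := main δ hδpos t ht
      rw [hgdef] at this; dsimp only at this
      have haux : ∀ a e : ℝ, e ≠ 0 → a / (2 * e) * e = a / 2 := by
        intro a e he
        field_simp
      have hδe : δ * Real.exp t = (f 0 * Real.exp (E t) - f t) / 2 := by
        rw [hδdef]
        exact haux _ _ (ne_of_gt (Real.exp_pos t))
      rw [hδe] at this
      linarith
    rw [hEeq t ht]
    constructor
    · exact hlow
    · exact le_trans (mul_nonneg hf0 (Real.exp_pos _).le) hlow
  refine ⟨?_, part2⟩
  -- part 1: the differential inequality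
  intro t ht f' hf'
  obtain ⟨k, hk, hkeq⟩ := K.exists_mem_eq_inf' hKne (fun j => v j t)
  have hact : v k t = f t := by rw [hf t, hkeq]
  have hmin : IsLocalMin (fun s => v k s - f s) t := by
    refine Filter.Eventually.of_forall fun s => ?_
    show v k t - f t ≤ v k s - f s
    have := hfle s k hk
    have h0 : v k t - f t = 0 := by rw [hact]; ring
    linarith
  have hd : HasDerivAt (fun s => v k s - f s) (F k t - f') t := by
    rw [hFdef]
    exact (hode k hk t ht).sub hf'
  have hzero : F k t - f' = 0 := hmin.hasDerivAt_eq_zero hd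
  have hft : 0 ≤ f t := (part2 t ht).2
  have := hkey_pos t ht k hk hact hft
  linarith
end
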